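/- Let (Ḡ, j, p) be a central extension of a group G by ℝ, s_x a section of p (with s_x(1)=1) with homogeneous associated cochain φ and bounded defect c_x, (Ψ, f) an abstract kernel for Π and G, Ψ̄(α)(ḡ) := s_x(Ψ(α)(p(ḡ)))·j(φ(ḡ)), and F_x := s_x ∘ f. Define K(α,β,γ) := Ψ̄(α)(F_x(β,γ))·F_x(α,βγ)·F_x(αβ,γ)⁻¹·F_x(α,β)⁻¹. Then for all α, β, γ ∈ Π: K(α,β,γ) lies in the center of Ḡ, and φ(K(α,β,γ)) = c_x(Ψ(α)(f(β,γ)), f(α,βγ)) − c_x(f(α,β), f(αβ,γ)). In particular the function (α,β,γ) ↦ φ(K(α,β,γ)) is bounded on Π³. -/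

import Mathlib

/-!
Write `K(α,β,γ) = s(a)s(b)s(d)⁻¹s(c)⁻¹` with `a = Ψ(α)(f(β,γ))`, `b = f(α,βγ)`, `c = f(α,β)`,
`d = f(αβ,γ)`. Since `s(g)s(h) = s(gh)j(c_x(g,h))` with `j` central,
`K = s(ab)s(cd)⁻¹ · j(c_x(a,b) − c_x(c,d))`. Expanding `Ψ(α)Ψ(β)Ψ(γ)` in two ways shows that
`ab` and `cd` induce the same inner automorphism, so `ab(cd)⁻¹` is central in `G`.
The cochain `φ` is a homogeneous quasimorphism with defect `c_x`, hence conjugation invariant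
and additive on commuting pairs; conjugation invariance forces every lift of a central element
of `G` to be central in `Ḡ`, and additivity then gives `φ(s(ab)s(cd)⁻¹) = 0`.
-/

theorem eq_zero_of_forall_abs_nat_mul_le {d C : ℝ} (h : ∀ n : ℕ, |n * d| ≤ C) : d = 0 := by
  by_contra hd
  obtain ⟨n, hn⟩ := exists_nat_gt (C / |d|)
  have hCn := (div_lt_iff₀ (abs_pos.mpr hd)).mp hn
  have hn_le := h n
  rw [abs_mul, Nat.abs_cast] at hn_le
  linarith

section HomogeneousQuasimorphism

variable {H : Type*} [Group H] {φ : H → ℝ} {D : ℝ}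

theorem homogeneous_pow_nat (hhom : ∀ (x : H) (n : ℤ), φ (x ^ n) = n * φ x) (x : H) (n : ℕ) :
    φ (x ^ n) = n * φ x := by
  simpa using hhom x n

theorem homogeneous_inv (hhom : ∀ (x : H) (n : ℤ), φ (x ^ n) = n * φ x) (x : H) :
    φ x⁻¹ = -φ x := by
  simpa using hhom x (-1)

theorem homogeneous_conj (hhom : ∀ (x : H) (n : ℤ), φ (x ^ n) = n * φ x)
    (hD : ∀ u v, |φ (u * v) - φ u - φ v| ≤ D) (u v : H) : φ (u * v * u⁻¹) = φ v := by
  suffices φ (u * v * u⁻¹) - φ v = 0 by linarith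
  refine eq_zero_of_forall_abs_nat_mul_le (C := D + D) fun n => ?_
  rw [mul_sub, ← homogeneous_pow_nat hhom, ← homogeneous_pow_nat hhom, conj_pow]
  have h₁ := hD (u * v ^ n) u⁻¹
  have h₂ := hD u (v ^ n)
  rw [homogeneous_inv hhom] at h₁
  rw [abs_le] at h₁ h₂ ⊢
  constructor <;> linarith

theorem homogeneous_mul_of_commute (hhom : ∀ (x : H) (n : ℤ), φ (x ^ n) = n * φ x)
    (hD : ∀ u v, |φ (u * v) - φ u - φ v| ≤ D) {u v : H} (huv : Commute u v) :
    φ (u * v) = φ u + φ v := by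
  suffices φ (u * v) - φ u - φ v = 0 by linarith
  refine eq_zero_of_forall_abs_nat_mul_le (C := D) fun n => ?_
  rw [mul_sub, mul_sub, ← homogeneous_pow_nat hhom, ← homogeneous_pow_nat hhom,
    ← homogeneous_pow_nat hhom, huv.mul_pow]
  exact hD _ _

theorem homogeneous_mul_inv_of_mem_center (hhom : ∀ (x : H) (n : ℤ), φ (x ^ n) = n * φ x)
    (hD : ∀ u v, |φ (u * v) - φ u - φ v| ≤ D) {u v : H} (huv : u * v⁻¹ ∈ Subgroup.center H) :
    φ (u * v⁻¹) = φ u - φ v := by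
  have hcomm : Commute (u * v⁻¹ * v) v⁻¹ :=
    (Commute.symm (Subgroup.mem_center_iff.mp huv v⁻¹)).mul_left (Commute.refl v).inv_right
  rw [inv_mul_cancel_right] at hcomm
  rw [homogeneous_mul_of_commute hhom hD hcomm, homogeneous_inv hhom, sub_eq_add_neg]

end HomogeneousQuasimorphism

section CentralExtension

variable {G Gb : Type*} [Group G] [Group Gb] {j : ℝ → Gb} {p : Gb →* G} {sx : G → Gb}
  {φ : Gb → ℝ} {cx : G → G → ℝ}

theorem map_zero_of_map_add (hj_hom : ∀ t u : ℝ, j (t + u) = j t * j u) : j 0 = 1 := by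
  have h := hj_hom 0 0
  rw [add_zero] at h
  exact left_eq_mul.mp h

theorem map_sub_of_map_add (hj_hom : ∀ t u : ℝ, j (t + u) = j t * j u) (s t : ℝ) :
    j (s - t) = j s * (j t)⁻¹ :=
  eq_mul_inv_of_mul_eq (by rw [← hj_hom, sub_add_cancel])

theorem cochain_section_eq_zero (hj_hom : ∀ t u : ℝ, j (t + u) = j t * j u)
    (hj_inj : Function.Injective j) (hsx : ∀ g, p (sx g) = g)
    (hφ : ∀ x, x = sx (p x) * j (φ x)) (g : G) : φ (sx g) = 0 := by
  have h := hφ (sx g)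
  rw [hsx] at h
  exact hj_inj ((left_eq_mul.mp h).trans (map_zero_of_map_add hj_hom).symm)

theorem cochain_mul_j (hj_hom : ∀ t u : ℝ, j (t + u) = j t * j u)
    (hj_inj : Function.Injective j) (hpj : ∀ t, p (j t) = 1)
    (hφ : ∀ x, x = sx (p x) * j (φ x)) (z : Gb) (t : ℝ) : φ (z * j t) = φ z + t := by
  have h := hφ (z * j t)
  rw [map_mul, hpj, mul_one] at h
  conv_lhs at h => rw [hφ z, mul_assoc, ← hj_hom]
  exact hj_inj (mul_left_cancel h).symm

theorem section_mul_section (hj_cent : ∀ t, j t ∈ Subgroup.center Gb)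
    (hcx : ∀ g h, j (cx g h) = sx g * sx h * (sx (g * h))⁻¹) (g h : G) :
    sx g * sx h = sx (g * h) * j (cx g h) := by
  rw [Subgroup.mem_center_iff.mp (hj_cent (cx g h)) (sx (g * h)), hcx, inv_mul_cancel_right]

theorem cochain_mul (hj_hom : ∀ t u : ℝ, j (t + u) = j t * j u)
    (hj_inj : Function.Injective j) (hj_cent : ∀ t, j t ∈ Subgroup.center Gb)
    (hpj : ∀ t, p (j t) = 1) (hsx : ∀ g, p (sx g) = g) (hφ : ∀ x, x = sx (p x) * j (φ x))
    (hcx : ∀ g h, j (cx g h) = sx g * sx h * (sx (g * h))⁻¹) (u v : Gb) :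
    φ (u * v) = cx (p u) (p v) + φ u + φ v := by
  have huv : u * v = sx (p u * p v) * j (cx (p u) (p v)) * j (φ u) * j (φ v) := by
    conv_lhs => rw [hφ u, hφ v]
    rw [← section_mul_section hj_cent hcx, mul_assoc (sx (p u)), ← mul_assoc (j (φ u)),
      ← Subgroup.mem_center_iff.mp (hj_cent (φ u)) (sx (p v))]
    simp only [mul_assoc]
  rw [huv, cochain_mul_j hj_hom hj_inj hpj hφ, cochain_mul_j hj_hom hj_inj hpj hφ,
    cochain_mul_j hj_hom hj_inj hpj hφ, cochain_section_eq_zero hj_hom hj_inj hsx hφ, zero_add]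

theorem section_mul_section_mul_inv_mul_inv (hj_hom : ∀ t u : ℝ, j (t + u) = j t * j u)
    (hj_cent : ∀ t, j t ∈ Subgroup.center Gb)
    (hcx : ∀ g h, j (cx g h) = sx g * sx h * (sx (g * h))⁻¹) (a b c d : G) :
    sx a * sx b * (sx d)⁻¹ * (sx c)⁻¹ = sx (a * b) * (sx (c * d))⁻¹ * j (cx a b - cx c d) := by
  calc sx a * sx b * (sx d)⁻¹ * (sx c)⁻¹ = sx a * sx b * (sx c * sx d)⁻¹ := by group
    _ = sx (a * b) * j (cx a b) * (sx (c * d) * j (cx c d))⁻¹ := by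
      rw [section_mul_section hj_cent hcx, section_mul_section hj_cent hcx]
    _ = sx (a * b) * (j (cx a b) * (j (cx c d))⁻¹ * (sx (c * d))⁻¹) := by group
    _ = sx (a * b) * ((sx (c * d))⁻¹ * j (cx a b - cx c d)) := by
      rw [Subgroup.mem_center_iff.mp (hj_cent _) (sx (c * d))⁻¹, map_sub_of_map_add hj_hom]
    _ = sx (a * b) * (sx (c * d))⁻¹ * j (cx a b - cx c d) := (mul_assoc _ _ _).symm

theorem mem_center_of_map_mem_center (hj_hom : ∀ t u : ℝ, j (t + u) = j t * j u)
    (hj_cent : ∀ t, j t ∈ Subgroup.center Gb) (hker : ∀ x, p x = 1 → ∃ t, j t = x)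
    (hconj : ∀ u v, φ (u * v * u⁻¹) = φ v) (hφj : ∀ z t, φ (z * j t) = φ z + t)
    {w : Gb} (hw : p w ∈ Subgroup.center G) : w ∈ Subgroup.center Gb := by
  refine Subgroup.mem_center_iff.mpr fun v => ?_
  obtain ⟨t, ht⟩ := hker (w * v * w⁻¹ * v⁻¹) (by
    rw [map_mul, map_mul, map_mul, map_inv, map_inv, ← Subgroup.mem_center_iff.mp hw]
    group)
  have hconj_wv : w * v * w⁻¹ = v * j t := by
    rw [Subgroup.mem_center_iff.mp (hj_cent t) v, ht]
    group
  have ht0 : t = 0 := by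
    have h := hconj w v
    rw [hconj_wv, hφj] at h
    linarith
  rw [ht0, map_zero_of_map_add hj_hom] at hconj_wv
  exact (mul_inv_eq_iff_eq_mul.mp (hconj_wv.trans (mul_one v))).symm

end CentralExtension

theorem mul_inv_mem_center_of_conj_eq {G : Type*} [Group G] {x y : G}
    (h : ∀ g, x * g * x⁻¹ = y * g * y⁻¹) : x * y⁻¹ ∈ Subgroup.center G := by
  refine Subgroup.mem_center_iff.mpr fun g => ?_
  have hg : x * y⁻¹ * g * (x * y⁻¹)⁻¹ = g :=
    calc x * y⁻¹ * g * (x * y⁻¹)⁻¹ = x * (y⁻¹ * g * y) * x⁻¹ := by group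
      _ = y * (y⁻¹ * g * y) * y⁻¹ := h _
      _ = g := by group
  exact (mul_inv_eq_iff_eq_mul.mp hg).symm

theorem kernel_obstruction_mem_center {G P : Type*} [Group G] [Group P] {Ψ : P → G ≃* G}
    {f : P → P → G}
    (hkernel : ∀ (α β : P) (g : G), Ψ α (Ψ β g) = f α β * Ψ (α * β) g * (f α β)⁻¹)
    (α β γ : P) :
    Ψ α (f β γ) * f α (β * γ) * (f α β * f (α * β) γ)⁻¹ ∈ Subgroup.center G := by
  refine mul_inv_mem_center_of_conj_eq fun g => ?_
  obtain ⟨g, rfl⟩ := (Ψ (α * β * γ)).surjective g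
  have h₁ := hkernel α β (Ψ γ g)
  rw [hkernel (α * β) γ g] at h₁
  have h₂ := congrArg (Ψ α) (hkernel β γ g)
  rw [map_mul, map_mul, map_inv, hkernel α (β * γ) g, ← mul_assoc α β γ] at h₂
  calc Ψ α (f β γ) * f α (β * γ) * Ψ (α * β * γ) g * (Ψ α (f β γ) * f α (β * γ))⁻¹
      = Ψ α (Ψ β (Ψ γ g)) := by rw [h₂]; group
    _ = f α β * f (α * β) γ * Ψ (α * β * γ) g * (f α β * f (α * β) γ)⁻¹ := by rw [h₁]; group

theorem stmt_15_general {G Gb P : Type*} [Group G] [Group Gb] [Group P]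
    (j : ℝ → Gb) (p : Gb →* G)
    (hj_hom : ∀ t u : ℝ, j (t + u) = j t * j u)
    (hj_inj : Function.Injective j)
    (hj_cent : ∀ t : ℝ, j t ∈ Subgroup.center Gb)
    (hker : ∀ x : Gb, p x = 1 ↔ ∃ t : ℝ, j t = x)
    (sx : G → Gb) (hsx : ∀ g : G, p (sx g) = g)
    (φ : Gb → ℝ) (hφ : ∀ x : Gb, x = sx (p x) * j (φ x))
    (hφ_hom : ∀ (x : Gb) (n : ℤ), φ (x ^ n) = n * φ x)
    (cx : G → G → ℝ) (hcx : ∀ g h : G, j (cx g h) = sx g * sx h * (sx (g * h))⁻¹)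
    (hcx_bdd : ∃ k : ℝ, ∀ g h : G, |cx g h| ≤ k)
    (Ψ : P → G ≃* G) (f : P → P → G)
    (hkernel : ∀ (α β : P) (g : G),
      Ψ α (Ψ β g) = f α β * Ψ (α * β) g * (f α β)⁻¹)
    (Ψb : P → Gb → Gb) (hΨb : ∀ (α : P) (x : Gb), Ψb α x = sx (Ψ α (p x)) * j (φ x))
    (Fx : P → P → Gb) (hFx : ∀ α β : P, Fx α β = sx (f α β))
    (K : P → P → P → Gb)
    (hK : ∀ α β γ : P, K α β γ =
      Ψb α (Fx β γ) * Fx α (β * γ) * (Fx (α * β) γ)⁻¹ * (Fx α β)⁻¹) :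
    (∀ α β γ : P, K α β γ ∈ Subgroup.center Gb) ∧
    (∀ α β γ : P,
      φ (K α β γ) = cx (Ψ α (f β γ)) (f α (β * γ)) - cx (f α β) (f (α * β) γ)) ∧
    (∃ k : ℝ, ∀ α β γ : P, |φ (K α β γ)| ≤ k) := by
  obtain ⟨k, hk⟩ := hcx_bdd
  have hpj : ∀ t, p (j t) = 1 := fun t => (hker _).2 ⟨t, rfl⟩
  have hφs := cochain_section_eq_zero hj_hom hj_inj hsx hφ
  have hφj := cochain_mul_j hj_hom hj_inj hpj hφ
  have hD : ∀ u v, |φ (u * v) - φ u - φ v| ≤ k := fun u v => by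
    rw [cochain_mul hj_hom hj_inj hj_cent hpj hsx hφ hcx]
    convert hk (p u) (p v) using 2
    ring
  have main : ∀ α β γ : P, K α β γ ∈ Subgroup.center Gb ∧
      φ (K α β γ) = cx (Ψ α (f β γ)) (f α (β * γ)) - cx (f α β) (f (α * β) γ) := by
    intro α β γ
    have hw : sx (Ψ α (f β γ) * f α (β * γ)) * (sx (f α β * f (α * β) γ))⁻¹
        ∈ Subgroup.center Gb :=
      mem_center_of_map_mem_center hj_hom hj_cent (fun x => (hker x).1)
        (homogeneous_conj hφ_hom hD) hφj
        (by rw [map_mul, map_inv, hsx, hsx]; exact kernel_obstruction_mem_center hkernel α β γ)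
    rw [hK, hΨb]
    simp only [hFx]
    rw [hsx, hφs, map_zero_of_map_add hj_hom, mul_one,
      section_mul_section_mul_inv_mul_inv hj_hom hj_cent hcx, hφj,
      homogeneous_mul_inv_of_mem_center hφ_hom hD hw, hφs, hφs, sub_zero, zero_add]
    exact ⟨Subgroup.mul_mem _ hw (hj_cent _), rfl⟩
  refine ⟨fun α β γ => (main α β γ).1, fun α β γ => (main α β γ).2, k + k, fun α β γ => ?_⟩
  rw [(main α β γ).2]
  exact (abs_sub _ _).trans (add_le_add (hk _ _) (hk _ _))

/-- the obstruction cochain `K(α,β,γ)` built from `Ψ̄` and `F_x = s_x ∘ f`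
is central in `Ḡ`, its `φ`-component is the composition cochain
`c_x(Ψ(α)(f(β,γ)), f(α,βγ)) − c_x(f(α,β), f(αβ,γ))`, and the latter is bounded on `Π³`. -/
theorem stmt_15 {G Gb P : Type*} [Group G] [Group Gb] [Group P]
    (j : ℝ → Gb) (p : Gb →* G)
    (hj_hom : ∀ t u : ℝ, j (t + u) = j t * j u)
    (hj_inj : Function.Injective j)
    (hj_cent : ∀ t : ℝ, j t ∈ Subgroup.center Gb)
    (hp_surj : Function.Surjective p)
    (hker : ∀ x : Gb, p x = 1 ↔ ∃ t : ℝ, j t = x)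
    (sx : G → Gb) (hsx : ∀ g : G, p (sx g) = g) (hsx1 : sx 1 = 1)
    (φ : Gb → ℝ) (hφ : ∀ x : Gb, x = sx (p x) * j (φ x))
    (hφ_hom : ∀ (x : Gb) (n : ℤ), φ (x ^ n) = n * φ x)
    (cx : G → G → ℝ) (hcx : ∀ g h : G, j (cx g h) = sx g * sx h * (sx (g * h))⁻¹)
    (hcx_bdd : ∃ k : ℝ, ∀ g h : G, |cx g h| ≤ k)
    (Ψ : P → G ≃* G) (f : P → P → G)
    (hkernel : ∀ (α β : P) (g : G),
      Ψ α (Ψ β g) = f α β * Ψ (α * β) g * (f α β)⁻¹)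
    (Ψb : P → Gb → Gb) (hΨb : ∀ (α : P) (x : Gb), Ψb α x = sx (Ψ α (p x)) * j (φ x))
    (Fx : P → P → Gb) (hFx : ∀ α β : P, Fx α β = sx (f α β))
    (K : P → P → P → Gb)
    (hK : ∀ α β γ : P, K α β γ =
      Ψb α (Fx β γ) * Fx α (β * γ) * (Fx (α * β) γ)⁻¹ * (Fx α β)⁻¹) :
    (∀ α β γ : P, K α β γ ∈ Subgroup.center Gb) ∧
    (∀ α β γ : P,
      φ (K α β γ) = cx (Ψ α (f β γ)) (f α (β * γ)) - cx (f α β) (f (α * β) γ)) ∧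
    (∃ k : ℝ, ∀ α β γ : P, |φ (K α β γ)| ≤ k) :=
  stmt_15_general j p hj_hom hj_inj hj_cent hker sx hsx φ hφ hφ_hom cx hcx hcx_bdd Ψ f hkernel Ψb
    hΨb Fx hFx K hK
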